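/- arXiv:2509.11460 — 2 statements merged into one kernel-verified Lean document; each statement's English description precedes it below -/
import Mathlib

section
/- Let C = (C_1, …, C_g) be a cycle system for a matroid M, let e be an element of the unique union C_{[g]} with e ∈ C_i, and let C' = (C_j)_{j ≠ i} be the induced cycle system for M ∖ e. Then for every (a_j)_{j ≠ i} ∈ ℕ^{g−1}: (a_j)_{j ≠ i} is a coparking function for C' with respect to M ∖ e if and only if the vector obtained by inserting a_i = 0 in position i is a coparking function for C with respect to M. In particular, the coparking functions a for C with a_i = 0 are exactly those arising this way; and if e is a loop of M, then every coparking function a for C satisfies a_i = 0. -/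
open Set Matroid

/-- The unique union of the subfamily of `A` indexed by `σ`: the set of elements that lie in
`A i` for exactly one index `i ∈ σ`. -/
def uniqueUnion {α ι : Type*} (A : ι → Set α) (σ : Finset ι) : Set α :=
  {e | ∃! i, i ∈ σ ∧ e ∈ A i}

namespace Matroid

variable {α : Type*}

/-- A circuit of a matroid: a minimal dependent set. -/
def Circuit (M : Matroid α) (C : Set α) : Prop := Minimal M.Dep C

/-- A cycle of a matroid: a union of circuits. -/
def IsCycle (M : Matroid α) (K : Set α) : Prop :=
  ∃ S : Set (Set α), (∀ C ∈ S, M.Circuit C) ∧ K = ⋃₀ S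

/-- The rank of a matroid: the cardinality of a base. -/
noncomputable def rkNat (M : Matroid α) : ℕ := M.exists_isBase.choose.ncard

/-- A cycle system for `M`: a family of cycles, indexed by a finite type whose cardinality is
the corank `|E| - rank` of `M`, such that the unique union of every nonempty subfamily is
dependent. -/
def IsCycleSystem (M : Matroid α) {ι : Type*} [Fintype ι] (C : ι → Set α) : Prop :=
  Fintype.card ι = M.E.ncard - M.rkNat ∧ (∀ i, M.IsCycle (C i)) ∧
    ∀ σ : Finset ι, σ.Nonempty → M.Dep (uniqueUnion C σ)

/-- Deletion of a set of elements from a matroid. -/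
def delete' (M : Matroid α) (D : Set α) : Matroid α := M ↾ (M.E \ D)

/-- Contraction of a set of elements in a matroid, defined via duality. -/
def contract' (M : Matroid α) (X : Set α) : Matroid α := (M✶.delete' X)✶

end Matroid

/-- A coparking function with respect to a family `C` of sets: a vector `a` of naturals such
that every nonempty index set `σ` contains some `i` with `a i < |C i ∩ uniqueUnion C σ|`. -/
def IsCoparking {α ι : Type*} [Fintype ι] (C : ι → Set α) (a : ι → ℕ) : Prop :=
  ∀ σ : Finset ι, σ.Nonempty → ∃ i ∈ σ, a i < (C i ∩ uniqueUnion C σ).ncard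

section Helpers

variable {α : Type*}

lemma uu_map {ι : Type*} (C : ι → Set α) (p : ι → Prop)
    (σ' : Finset {j // p j}) :
    uniqueUnion (fun j : {j // p j} => C j.1) σ' =
      uniqueUnion C (σ'.map ⟨Subtype.val, Subtype.val_injective⟩) := by
  ext x
  simp only [uniqueUnion, Set.mem_setOf_eq]
  constructor
  · rintro ⟨j, ⟨hm, hx⟩, hu⟩
    refine ⟨j.1, ⟨Finset.mem_map.mpr ⟨j, hm, rfl⟩, hx⟩, ?_⟩
    rintro y ⟨hy, hxy⟩
    obtain ⟨y', hy', rfl⟩ := Finset.mem_map.mp hy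
    exact congrArg Subtype.val (hu y' ⟨hy', hxy⟩)
  · rintro ⟨j, ⟨hm, hx⟩, hu⟩
    obtain ⟨j', hj', rfl⟩ := Finset.mem_map.mp hm
    refine ⟨j', ⟨hj', hx⟩, ?_⟩
    rintro y ⟨hy, hxy⟩
    exact Subtype.ext (hu y.1 ⟨Finset.mem_map.mpr ⟨y, hy, rfl⟩, hxy⟩)

lemma cycle_subset_ground {M : Matroid α} {K : Set α} (h : M.IsCycle K) : K ⊆ M.E := by
  obtain ⟨S, hS, rfl⟩ := h
  exact Set.sUnion_subset fun c hc => (hS c hc).prop.subset_ground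

lemma rkNat_eq_of_base {M : Matroid α} {B : Set α} (hB : M.IsBase B) :
    M.rkNat = B.ncard :=
  M.exists_isBase.choose_spec.ncard_eq_ncard_of_isBase hB

lemma dep_restrict_iff {M : Matroid α} {R D : Set α} (hR : R ⊆ M.E) (hD : D ⊆ R) :
    (M ↾ R).Dep D ↔ M.Dep D := by
  rw [Matroid.restrict_dep_iff, Matroid.dep_iff]
  exact ⟨fun h => ⟨h.1, hD.trans hR⟩, fun h => ⟨h.1, hD⟩⟩

lemma circuit_restrict {M : Matroid α} {R K : Set α} (hR : R ⊆ M.E) (hK : K ⊆ R)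
    (h : M.Circuit K) : (M ↾ R).Circuit K := by
  constructor
  · exact (dep_restrict_iff hR hK).mpr h.prop
  · intro D hD hDK
    exact h.2 ((dep_restrict_iff hR (hDK.trans hK)).mp hD) hDK

lemma cycle_restrict {M : Matroid α} {R K : Set α} (hR : R ⊆ M.E) (hK : K ⊆ R)
    (h : M.IsCycle K) : (M ↾ R).IsCycle K := by
  obtain ⟨S, hS, rfl⟩ := h
  exact ⟨S, fun c hc => circuit_restrict hR ((Set.subset_sUnion_of_mem hc).trans hK) (hS c hc),
    rfl⟩

end Helpers

section Span

lemma span_eq_top_of_odd {ι : Type*} [Fintype ι] [DecidableEq ι] (S : Set (ι → ZMod 2))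
    (H : ∀ σ : Finset ι, σ.Nonempty → ∃ v ∈ S, ∑ j ∈ σ, v j ≠ 0) :
    Submodule.span (ZMod 2) S = ⊤ := by
  have hone : ∀ x : ZMod 2, x ≠ 0 → x = 1 := by decide
  by_contra hne
  obtain ⟨f, hf0, hmap⟩ := Submodule.exists_dual_map_eq_bot_of_lt_top
    (lt_top_iff_ne_top.mpr hne) inferInstance
  set c : ι → ZMod 2 := fun j => f (fun k => if j = k then 1 else 0) with hc
  have hrepr : ∀ v : ι → ZMod 2, f v = ∑ j, v j * c j := by
    intro v
    conv_lhs => rw [pi_eq_sum_univ v]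
    rw [map_sum]
    exact Finset.sum_congr rfl fun j _ => by rw [map_smul, smul_eq_mul]
  set σ : Finset ι := Finset.univ.filter (fun j => c j ≠ 0) with hσ
  have hσne : σ.Nonempty := by
    by_contra h
    rw [Finset.not_nonempty_iff_eq_empty, Finset.filter_eq_empty_iff] at h
    apply hf0
    apply LinearMap.ext
    intro v
    rw [hrepr v, LinearMap.zero_apply]
    refine Finset.sum_eq_zero fun j _ => ?_
    have : c j = 0 := by
      by_contra hcj; exact (h (Finset.mem_univ j)) hcj
    rw [this, mul_zero]
  obtain ⟨v, hvS, hvsum⟩ := H σ hσne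
  apply hvsum
  have hfv : f v = 0 := by
    have hmem : f v ∈ Submodule.map f (Submodule.span (ZMod 2) S) :=
      Submodule.mem_map_of_mem (Submodule.subset_span hvS)
    rwa [hmap, Submodule.mem_bot] at hmem
  have hsplit : ∑ j, v j * c j = ∑ j ∈ σ, v j * c j :=
    (Finset.sum_subset (Finset.subset_univ σ) (fun j _ hj => by
      have hcj : c j = 0 := by
        by_contra hcj
        exact hj (Finset.mem_filter.mpr ⟨Finset.mem_univ j, hcj⟩)
      rw [hcj, mul_zero])).symm
  have : f v = ∑ j ∈ σ, v j := by
    rw [hrepr v, hsplit]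
    exact Finset.sum_congr rfl fun j hj => by
      rw [hone (c j) (Finset.mem_filter.mp hj).2, mul_one]
  rw [← this, hfv]

end Span

section Main

variable {α : Type*}

lemma lemA (M : Matroid α) (hE : M.E.Finite) {ι : Type*} [Fintype ι] [DecidableEq ι]
    (C : ι → Set α)
    (hcard : Fintype.card ι = M.E.ncard - M.rkNat)
    (hdep : ∀ σ : Finset ι, σ.Nonempty → M.Dep (uniqueUnion C σ))
    {e : α} (hloop : M.Dep {e}) (hnc : ∀ j, e ∉ C j) : False := by
  classical
  obtain ⟨B, hB⟩ := M.exists_isBase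
  have hrk : M.rkNat = B.ncard := rkNat_eq_of_base hB
  have hBE := hB.subset_ground
  have heE : e ∈ M.E := hloop.subset_ground rfl
  have heB : e ∉ B := fun h => hloop.not_indep (hB.indep.subset (Set.singleton_subset_iff.mpr h))
  set X := M.E \ B with hX
  have hXfin : X.Finite := hE.subset Set.diff_subset
  have heX : e ∈ X := ⟨heE, heB⟩
  have hXcard : X.ncard = Fintype.card ι := by
    rw [hX, Set.ncard_diff hBE (hE.subset hBE), hcard, hrk]
  set v : α → ι → ZMod 2 := fun x j => if x ∈ C j then 1 else 0 with hv
  set S : Set (ι → ZMod 2) := v '' (X \ {e}) with hS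
  have hfin : (X \ {e}).Finite := hXfin.subset Set.diff_subset
  have hSfin : S.Finite := hfin.image v
  have hspan : Submodule.span (ZMod 2) S = ⊤ := by
    apply span_eq_top_of_odd
    intro σ hσ
    have hdσ := hdep σ hσ
    have hsub : ¬ uniqueUnion C σ ⊆ B := fun h => hdσ.not_indep (hB.indep.subset h)
    obtain ⟨x, hxU, hxB⟩ := Set.not_subset.mp hsub
    obtain ⟨j₀, ⟨hj₀σ, hxj₀⟩, huniq⟩ := id hxU
    have hxe : x ≠ e := fun h => hnc j₀ (h ▸ hxj₀)
    have hxX : x ∈ X \ {e} := ⟨⟨hdσ.subset_ground hxU, hxB⟩, hxe⟩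
    refine ⟨v x, ⟨x, hxX, rfl⟩, ?_⟩
    have hsum : ∑ j ∈ σ, v x j = 1 := by
      rw [Finset.sum_eq_single_of_mem j₀ hj₀σ ?_]
      · simp [hv, hxj₀]
      · intro b hb hbne
        have : x ∉ C b := fun hxb => hbne (huniq b ⟨hb, hxb⟩)
        simp [hv, this]
    rw [hsum]; exact one_ne_zero
  haveI : Fintype S := hSfin.fintype
  have h1 : Fintype.card ι ≤ S.ncard := by
    have := finrank_span_le_card (R := ZMod 2) S
    rw [hspan, finrank_top, Module.finrank_pi, Set.ncard_eq_toFinset_card'] at *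
    exact this
  have h2 : S.ncard ≤ (X \ {e}).ncard := Set.ncard_image_le hfin
  have h3 : (X \ {e}).ncard = X.ncard - 1 := Set.ncard_diff_singleton_of_mem heX
  have h4 : 0 < X.ncard := (Set.ncard_pos hXfin).mpr ⟨e, heX⟩
  omega

lemma ctx_delete {M : Matroid α} (hE : M.E.Finite) {ι : Type*} [Fintype ι]
    [DecidableEq ι] {C : ι → Set α} (hCS : M.IsCycleSystem C) {x : α} {i₀ : ι}
    (hx : x ∈ uniqueUnion C Finset.univ) (hxi : x ∈ C i₀) :
    (M ↾ (M.E \ {x})).IsCycleSystem (fun j : {j // j ≠ i₀} => C j.1) := by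
  classical
  obtain ⟨hcard, hcyc, hdep⟩ := hCS
  have hx' : ∃! j, j ∈ (Finset.univ : Finset ι) ∧ x ∈ C j := hx
  have hxonly : ∀ j, j ≠ i₀ → x ∉ C j := fun j hj hxj =>
    hj (hx'.unique ⟨Finset.mem_univ j, hxj⟩ ⟨Finset.mem_univ i₀, hxi⟩)
  have hxE : x ∈ M.E := cycle_subset_ground (hcyc i₀) hxi
  -- find a base avoiding x
  obtain ⟨SS, hSS, hCeq⟩ := hcyc i₀
  have hxK : x ∈ ⋃₀ SS := hCeq ▸ hxi
  obtain ⟨K, hKS, hxK⟩ := hxK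
  have hK := hSS K hKS
  have hKE : K ⊆ M.E := hK.prop.subset_ground
  have hKx : M.Indep (K \ {x}) := by
    by_contra hcon
    have hdepKx : M.Dep (K \ {x}) := ⟨hcon, Set.diff_subset.trans hKE⟩
    have := hK.2 hdepKx Set.diff_subset
    exact (this hxK).2 rfl
  obtain ⟨B, hB, hKB⟩ := Matroid.Indep.exists_isBase_superset hKx
  have hxB : x ∉ B := by
    intro hxB
    apply hK.prop.not_indep
    refine hB.indep.subset fun y hy => ?_
    by_cases hyx : y = x
    · exact hyx ▸ hxB
    · exact hKB ⟨hy, hyx⟩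
  have hBsub : B ⊆ M.E \ {x} := fun y hy => ⟨hB.subset_ground hy, fun h => hxB (h ▸ hy)⟩
  have hB' : (M ↾ (M.E \ {x})).IsBase B :=
    (Matroid.isBase_restrict_iff Set.diff_subset).mpr
      (hB.isBasis_ground.isBasis_subset hBsub Set.diff_subset)
  refine ⟨?_, ?_, ?_⟩
  · have h1 : (M.E \ {x}).ncard = M.E.ncard - 1 := Set.ncard_diff_singleton_of_mem hxE
    have h2 : (M ↾ (M.E \ {x})).rkNat = B.ncard := rkNat_eq_of_base hB'
    have h3 : M.rkNat = B.ncard := rkNat_eq_of_base hB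
    have h4 : Fintype.card {j // j ≠ i₀} = Fintype.card ι - 1 := by
      rw [Fintype.card_subtype_compl, Fintype.card_subtype_eq]
    have hlt : B.ncard < M.E.ncard := by
      refine Set.ncard_lt_ncard ?_ hE
      rw [Set.ssubset_def]
      exact ⟨hB.subset_ground, fun hEB => hxB (hEB hxE)⟩
    have hground : (M ↾ (M.E \ {x})).E = M.E \ {x} := Matroid.restrict_ground_eq
    rw [hground, h1, h2, h4]
    omega
  · intro j
    refine cycle_restrict Set.diff_subset (fun y hy => ?_) (hcyc j.1)
    exact ⟨cycle_subset_ground (hcyc j.1) hy, fun h => hxonly j.1 j.2 (h ▸ hy)⟩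
  · intro σ' hσ'
    rw [uu_map]
    have hmapne : (σ'.map ⟨Subtype.val, Subtype.val_injective⟩).Nonempty :=
      Finset.map_nonempty.mpr hσ'
    have hd := hdep _ hmapne
    refine (dep_restrict_iff Set.diff_subset ?_).mpr hd
    intro y hyU
    refine ⟨hd.subset_ground hyU, ?_⟩
    intro hy
    rw [Set.mem_singleton_iff] at hy
    subst hy
    obtain ⟨j, ⟨hjm, hxj⟩, _⟩ := hyU
    obtain ⟨j', hj', rfl⟩ := Finset.mem_map.mp hjm
    exact hxonly j'.1 j'.2 hxj

lemma keyG : ∀ (n : ℕ) (M : Matroid α) (ι : Type) (_ : Fintype ι) (_ : DecidableEq ι)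
    (C : ι → Set α) (e : α) (i : ι), M.E.ncard ≤ n → M.E.Finite → M.IsCycleSystem C →
    M.Dep {e} → (∀ j, e ∈ C j ↔ j = i) →
    ∃ σ : Finset ι, i ∈ σ ∧ uniqueUnion C σ = {e} := by
  intro n
  induction n with
  | zero =>
    intro M ι _ _ C e i hn hE _ hloop _
    have heE : e ∈ M.E := hloop.subset_ground rfl
    have := (Set.ncard_pos hE).mpr ⟨e, heE⟩
    omega
  | succ n IH =>
    intro M ι _ _ C e i hn hE hCS hloop hcov
    classical
    have heE : e ∈ M.E := hloop.subset_ground rfl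
    have heU : e ∈ uniqueUnion C Finset.univ :=
      ⟨i, ⟨Finset.mem_univ i, (hcov i).mpr rfl⟩, fun y hy => (hcov y).mp hy.2⟩
    by_cases hall : ∀ x ∈ uniqueUnion C Finset.univ, x = e
    · exact ⟨Finset.univ, Finset.mem_univ i,
        Set.eq_singleton_iff_unique_mem.mpr ⟨heU, hall⟩⟩
    · push_neg at hall
      obtain ⟨x, hxU, hxe⟩ := hall
      obtain ⟨j₀, ⟨-, hxj₀⟩, -⟩ := id hxU
      have hxE : x ∈ M.E := cycle_subset_ground (hCS.2.1 j₀) hxj₀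
      have hCSd := ctx_delete hE hCS hxU hxj₀
      have hE' : (M ↾ (M.E \ {x})).E.Finite := hE.subset Set.diff_subset
      have hn' : (M ↾ (M.E \ {x})).E.ncard ≤ n := by
        have h1 : (M.E \ {x}).ncard = M.E.ncard - 1 := Set.ncard_diff_singleton_of_mem hxE
        have h0 : 0 < M.E.ncard := (Set.ncard_pos hE).mpr ⟨x, hxE⟩
        have hground : (M ↾ (M.E \ {x})).E = M.E \ {x} := Matroid.restrict_ground_eq
        rw [hground, h1]
        omega
      have hloop' : (M ↾ (M.E \ {x})).Dep {e} := by
        refine (dep_restrict_iff Set.diff_subset ?_).mpr hloop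
        intro y hy
        rw [Set.mem_singleton_iff] at hy
        subst hy
        exact ⟨heE, fun h => hxe ((Set.mem_singleton_iff.mp h).symm)⟩
      by_cases hj₀ : j₀ = i
      · subst hj₀
        exfalso
        obtain ⟨hc1, -, hc3⟩ := hCSd
        exact lemA _ hE' _ hc1 hc3 hloop' (fun j hj => j.2 ((hcov j.1).mp hj))
      · have hii : i ≠ j₀ := fun h => hj₀ h.symm
        obtain ⟨σ', hiσ', hUσ'⟩ := IH (M ↾ (M.E \ {x})) {j // j ≠ j₀} inferInstance
          inferInstance (fun j => C j.1) e ⟨i, hii⟩ hn' hE' hCSd hloop'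
          (fun j => ⟨fun hj => Subtype.ext ((hcov j.1).mp hj),
            fun hj => (hcov j.1).mpr (congrArg Subtype.val hj)⟩)
        refine ⟨σ'.map ⟨Subtype.val, Subtype.val_injective⟩, ?_, ?_⟩
        · exact Finset.mem_map.mpr ⟨⟨i, hii⟩, hiσ', rfl⟩
        · rw [← uu_map]; exact hUσ'

end Main

/-- coparking functions for the deleted cycle system `(C_j)_{j ≠ i}` correspond
exactly to coparking functions for `C` whose `i`-th entry is `0`; if `e` is a loop then every
coparking function for `C` has `i`-th entry `0`. -/
theorem statement_15 {α : Type*} {g : ℕ} (M : Matroid α) (hE : M.E.Finite)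
    (C : Fin g → Set α) (hCS : M.IsCycleSystem C) (e : α) (i : Fin g)
    (he : e ∈ uniqueUnion C Finset.univ) (hei : e ∈ C i) :
    (∀ a' : {j : Fin g // j ≠ i} → ℕ,
      IsCoparking (fun j : {j : Fin g // j ≠ i} => C j.1) a' ↔
        IsCoparking C (fun j => if h : j = i then 0 else a' ⟨j, h⟩)) ∧
    ({a : Fin g → ℕ | IsCoparking C a ∧ a i = 0} =
      (fun (a' : {j : Fin g // j ≠ i} → ℕ) (j : Fin g) =>
          if h : j = i then 0 else a' ⟨j, h⟩) ''
        {a' | IsCoparking (fun j : {j : Fin g // j ≠ i} => C j.1) a'}) ∧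
    (M.Dep {e} → ∀ a : Fin g → ℕ, IsCoparking C a → a i = 0) := by
  classical
  have he' : ∃! j, j ∈ (Finset.univ : Finset (Fin g)) ∧ e ∈ C j := he
  have hcov : ∀ j, e ∈ C j ↔ j = i := fun j =>
    ⟨fun hj => he'.unique ⟨Finset.mem_univ j, hj⟩ ⟨Finset.mem_univ i, hei⟩, fun hj => hj ▸ hei⟩
  have hCiE : ∀ j, C j ⊆ M.E := fun j => cycle_subset_ground (hCS.2.1 j)
  have part1 : ∀ a' : {j : Fin g // j ≠ i} → ℕ,
      IsCoparking (fun j : {j : Fin g // j ≠ i} => C j.1) a' ↔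
        IsCoparking C (fun j => if h : j = i then 0 else a' ⟨j, h⟩) := by
    intro a'
    constructor
    · intro ha σ hσ
      by_cases hiσ : i ∈ σ
      · refine ⟨i, hiσ, ?_⟩
        have h0 : (fun j => if h : j = i then 0 else a' ⟨j, h⟩) i = 0 := dif_pos rfl
        rw [h0]
        refine (Set.ncard_pos ((hE.subset (hCiE i)).subset Set.inter_subset_left)).mpr ?_
        exact ⟨e, hei, i, ⟨hiσ, hei⟩, fun y hy => (hcov y).mp hy.2⟩
      · set σ' : Finset {j : Fin g // j ≠ i} := σ.subtype _ with hσ'def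
        have hmapeq : σ'.map ⟨Subtype.val, Subtype.val_injective⟩ = σ := by
          ext j
          simp only [hσ'def, Finset.mem_map, Finset.mem_subtype, Function.Embedding.coeFn_mk]
          constructor
          · rintro ⟨⟨j', hj'⟩, hm, rfl⟩; exact hm
          · intro hj; exact ⟨⟨j, fun h => hiσ (h ▸ hj)⟩, hj, rfl⟩
        have hσ'ne : σ'.Nonempty := by
          obtain ⟨j, hj⟩ := hσ
          exact ⟨⟨j, fun h => hiσ (h ▸ hj)⟩, Finset.mem_subtype.mpr hj⟩
        obtain ⟨j, hjσ', hlt⟩ := ha σ' hσ'ne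
        rw [uu_map, hmapeq] at hlt
        refine ⟨j.1, Finset.mem_subtype.mp hjσ', ?_⟩
        have hne : (fun k => if h : k = i then 0 else a' ⟨k, h⟩) j.1 = a' j :=
          dif_neg j.2
        rw [hne]
        exact hlt
    · intro ha σ' hσ'
      set σ := σ'.map ⟨Subtype.val, Subtype.val_injective⟩ with hσdef
      have hσne : σ.Nonempty := Finset.map_nonempty.mpr hσ'
      obtain ⟨j, hjσ, hlt⟩ := ha σ hσne
      obtain ⟨j', hj'σ', hj'eq⟩ := Finset.mem_map.mp hjσ
      refine ⟨j', hj'σ', ?_⟩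
      rw [uu_map C _ σ']
      have hj1 : (j' : Fin g) = j := hj'eq
      subst hj1
      have hne : (fun k => if h : k = i then 0 else a' ⟨k, h⟩) j'.1 = a' j' :=
        dif_neg j'.2
      rw [hne] at hlt
      exact hlt
  refine ⟨part1, ?_, ?_⟩
  · ext a
    simp only [Set.mem_setOf_eq, Set.mem_image]
    constructor
    · rintro ⟨ha, hai⟩
      refine ⟨fun j => a j.1, ?_, ?_⟩
      · rw [part1]
        show IsCoparking C fun j => if h : j = i then 0 else a j
        have hfe : (fun j : Fin g => if h : j = i then 0 else a j) = a := by
          funext j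
          by_cases h : j = i
          · subst h; rw [dif_pos rfl, hai]
          · rw [dif_neg h]
        rw [hfe]
        exact ha
      · show (fun j : Fin g => if h : j = i then 0 else a j) = a
        funext j
        by_cases h : j = i
        · subst h; rw [dif_pos rfl, hai]
        · rw [dif_neg h]
    · rintro ⟨a', ha', rfl⟩
      exact ⟨(part1 a').mp ha', dif_pos rfl⟩
  · intro hdepe a ha
    obtain ⟨σ, hiσ, hUσ⟩ := keyG M.E.ncard M (Fin g) inferInstance inferInstance C e i
      le_rfl hE hCS hdepe hcov
    obtain ⟨j, hjσ, hlt⟩ := ha σ ⟨i, hiσ⟩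
    rw [hUσ] at hlt
    by_cases hji : j = i
    · subst hji
      have : C j ∩ {e} = {e} :=
        Set.inter_eq_self_of_subset_right (Set.singleton_subset_iff.mpr hei)
      rw [this, Set.ncard_singleton] at hlt
      omega
    · exfalso
      have : C j ∩ {e} = ∅ :=
        Set.inter_singleton_eq_empty.mpr (fun h => hji ((hcov j).mp h))
      rw [this, Set.ncard_empty] at hlt
      omega
end

section
/- Let M be a matroid on a finite ground set and let C = (C_1, …, C_g) be a cycle system for M. Then the number of coparking functions with respect to C equals the number of bases of M: |P*(C)| = |{B : B is a basis of M}|. -/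
open Set Matroid

namespace Matroid

variable {α : Type*}

/-- Deletion of a set of elements from a matroid. -/
def deleteSet (M : Matroid α) (D : Set α) : Matroid α := M ↾ (M.E \ D)

/-- Contraction of a set of elements in a matroid, defined via duality. -/
def contractSet (M : Matroid α) (X : Set α) : Matroid α := (M✶.deleteSet X)✶

end Matroid

section CombLemmas

open Set

variable {α ι : Type*}

lemma uniqueUnion_singleton (A : ι → Set α) (i : ι) : uniqueUnion A {i} = A i := by
  ext x
  constructor
  · rintro ⟨j, ⟨hj, hx⟩, -⟩
    rw [Finset.mem_singleton] at hj
    rwa [hj] at hx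
  · intro hx
    exact ⟨i, ⟨Finset.mem_singleton_self i, hx⟩, by
      rintro j ⟨hj, hxj⟩; rwa [Finset.mem_singleton] at hj⟩

lemma uniqueUnion_subset_biUnion (A : ι → Set α) (σ : Finset ι) :
    uniqueUnion A σ ⊆ ⋃ i ∈ σ, A i := by
  rintro x ⟨j, ⟨hj, hx⟩, -⟩
  exact Set.mem_biUnion hj hx

lemma mem_uniqueUnion_of_pattern {C : ι → Set α} {i₀ : ι} {e : α}
    (he : ∀ i, e ∈ C i ↔ i = i₀) {σ : Finset ι} :
    e ∈ uniqueUnion C σ ↔ i₀ ∈ σ := by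
  constructor
  · rintro ⟨j, ⟨hj, hx⟩, -⟩
    rwa [← (he j).1 hx]
  · intro h
    exact ⟨i₀, ⟨h, (he i₀).2 rfl⟩, by rintro j ⟨hj, hxj⟩; exact (he j).1 hxj⟩

lemma uniqueUnion_diff_singleton (C : ι → Set α) (e : α) (σ : Finset ι) :
    uniqueUnion (fun i => C i \ {e}) σ = uniqueUnion C σ \ {e} := by
  ext x
  by_cases hx : x = e
  · subst hx
    simp only [Set.mem_diff, Set.mem_singleton_iff, not_true_eq_false, and_false,
      iff_false]
    rintro ⟨j, ⟨hj, hxj⟩, -⟩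
    exact hxj.2 rfl
  · have hmem : ∀ i, x ∈ C i \ {e} ↔ x ∈ C i := fun i => by
      simp [Set.mem_diff, hx]
    constructor
    · rintro ⟨j, ⟨hj, hxj⟩, hu⟩
      refine ⟨⟨j, ⟨hj, (hmem j).1 hxj⟩, ?_⟩, hx⟩
      rintro i ⟨hi, hxi⟩
      exact hu i ⟨hi, (hmem i).2 hxi⟩
    · rintro ⟨⟨j, ⟨hj, hxj⟩, hu⟩, -⟩
      refine ⟨j, ⟨hj, (hmem j).2 hxj⟩, ?_⟩
      rintro i ⟨hi, hxi⟩
      exact hu i ⟨hi, (hmem i).1 hxi⟩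

lemma uniqueUnion_subtype (C : ι → Set α) (i₀ : ι) (σ' : Finset {i : ι // i ≠ i₀}) :
    uniqueUnion (fun j : {i : ι // i ≠ i₀} => C j.1) σ'
      = uniqueUnion C (σ'.map (Function.Embedding.subtype _)) := by
  ext x
  constructor
  · rintro ⟨j, ⟨hj, hx⟩, hu⟩
    refine ⟨j.1, ⟨Finset.mem_map_of_mem _ hj, hx⟩, ?_⟩
    rintro i ⟨hi, hxi⟩
    rw [Finset.mem_map] at hi
    obtain ⟨j', hj', rfl⟩ := hi
    have : j' = j := hu j' ⟨hj', hxi⟩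
    rw [this]
    rfl
  · rintro ⟨i, ⟨hi, hx⟩, hu⟩
    rw [Finset.mem_map] at hi
    obtain ⟨j, hj, rfl⟩ := hi
    refine ⟨j, ⟨hj, hx⟩, ?_⟩
    rintro j' ⟨hj', hxj'⟩
    have : (Function.Embedding.subtype _) j' = (Function.Embedding.subtype _) j :=
      hu j'.1 ⟨Finset.mem_map_of_mem _ hj', hxj'⟩
    exact (Function.Embedding.subtype _).injective this

variable [Fintype ι]

lemma coparking_bound {C : ι → Set α} {a : ι → ℕ} (ha : IsCoparking C a) (i : ι) :
    a i < (C i).ncard := by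
  obtain ⟨j, hj, hlt⟩ := ha {i} ⟨i, Finset.mem_singleton_self i⟩
  rw [Finset.mem_singleton] at hj
  subst hj
  rwa [uniqueUnion_singleton, Set.inter_self] at hlt

lemma coparking_setOf_finite (C : ι → Set α) :
    {a : ι → ℕ | IsCoparking C a}.Finite := by
  apply Set.Finite.subset (Set.Finite.pi (t := fun i => Set.Iio ((C i).ncard))
    (fun i => Set.finite_Iio _))
  intro a ha
  rw [Set.mem_pi]
  intro i _
  exact coparking_bound ha i

end CombLemmas

section CombLemmas2

open Set

variable {α : Type*} {ι : Type*} [Fintype ι] [DecidableEq ι]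

lemma ncard_coparking_zero {C : ι → Set α} {i₀ : ι} {e : α}
    (hfin : (C i₀).Finite) (he : ∀ i, e ∈ C i ↔ i = i₀) :
    {a : ι → ℕ | IsCoparking C a ∧ a i₀ = 0}.ncard
      = {b : {i : ι // i ≠ i₀} → ℕ | IsCoparking (fun j => C j.1) b}.ncard := by
  classical
  have himg : (fun (a : ι → ℕ) (j : {i : ι // i ≠ i₀}) => a j.1) ''
      {a | IsCoparking C a ∧ a i₀ = 0}
      = {b | IsCoparking (fun j : {i : ι // i ≠ i₀} => C j.1) b} := by
    apply subset_antisymm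
    · rintro b ⟨a, ⟨ha, -⟩, rfl⟩
      intro σ' hσ'
      have hσ : (σ'.map (Function.Embedding.subtype _)).Nonempty := hσ'.map
      obtain ⟨i, hi, hlt⟩ := ha _ hσ
      rw [Finset.mem_map] at hi
      obtain ⟨j, hj, rfl⟩ := hi
      refine ⟨j, hj, ?_⟩
      rw [uniqueUnion_subtype]
      exact hlt
    · rintro b hb
      refine ⟨fun i => if h : i = i₀ then 0 else b ⟨i, h⟩, ⟨?_, by simp⟩, ?_⟩
      · intro σ hσ
        by_cases hi₀ : i₀ ∈ σ
        · refine ⟨i₀, hi₀, ?_⟩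
          simp only [dif_pos]
          have hne : (C i₀ ∩ uniqueUnion C σ).Nonempty :=
            ⟨e, (he i₀).2 rfl, (mem_uniqueUnion_of_pattern he).2 hi₀⟩
          have hfin' : (C i₀ ∩ uniqueUnion C σ).Finite :=
            hfin.subset Set.inter_subset_left
          exact (Set.ncard_pos hfin').2 hne
        · have hmapeq : (σ.subtype (· ≠ i₀)).map (Function.Embedding.subtype _) = σ := by
            rw [Finset.subtype_map]
            exact Finset.filter_true_of_mem (fun i hi => by rintro rfl; exact hi₀ hi)
          have hσ'ne : (σ.subtype (· ≠ i₀)).Nonempty := by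
            obtain ⟨i, hi⟩ := hσ
            exact ⟨⟨i, fun h => hi₀ (h ▸ hi)⟩, by simp [Finset.mem_subtype, hi]⟩
          obtain ⟨j, hj, hlt⟩ := hb _ hσ'ne
          have hjσ : j.1 ∈ σ := by
            have := Finset.mem_map_of_mem (Function.Embedding.subtype (· ≠ i₀)) hj
            rwa [hmapeq] at this
          refine ⟨j.1, hjσ, ?_⟩
          rw [uniqueUnion_subtype, hmapeq] at hlt
          simpa [dif_neg j.2] using hlt
      · funext j
        simp [dif_neg j.2]
  rw [← himg, Set.ncard_image_of_injOn]
  rintro a ⟨-, ha0⟩ a' ⟨-, ha0'⟩ hres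
  funext i
  by_cases h : i = i₀
  · subst h; rw [ha0, ha0']
  · exact congrFun hres ⟨i, h⟩

lemma ncard_coparking_pos {C : ι → Set α} {i₀ : ι} {e : α}
    (hfin : ∀ i, (C i).Finite) (he : ∀ i, e ∈ C i ↔ i = i₀) :
    {a : ι → ℕ | IsCoparking C a ∧ a i₀ ≠ 0}.ncard
      = {b : ι → ℕ | IsCoparking (fun i => C i \ {e}) b}.ncard := by
  classical
  have hkey : ∀ (σ : Finset ι), ∀ i ∈ σ,
      ((fun i => C i \ {e}) i ∩ uniqueUnion (fun i => C i \ {e}) σ).ncard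
        = (C i ∩ uniqueUnion C σ).ncard - (if i = i₀ then 1 else 0) := by
    intro σ i hi
    simp only
    rw [uniqueUnion_diff_singleton]
    have heq : (C i \ {e}) ∩ (uniqueUnion C σ \ {e}) = (C i ∩ uniqueUnion C σ) \ {e} := by
      ext x; simp only [Set.mem_diff, Set.mem_inter_iff, Set.mem_singleton_iff]; tauto
    rw [heq]
    by_cases h : i = i₀
    · subst h
      rw [if_pos rfl]
      exact Set.ncard_diff_singleton_of_mem
        ⟨(he i).2 rfl, (mem_uniqueUnion_of_pattern he).2 hi⟩
    · have hne : e ∉ C i ∩ uniqueUnion C σ := by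
        rintro ⟨heC, -⟩
        exact h ((he i).1 heC)
      rw [if_neg h, Set.diff_singleton_eq_self hne, Nat.sub_zero]
  have hcard_pos : ∀ (σ : Finset ι), i₀ ∈ σ → 1 ≤ (C i₀ ∩ uniqueUnion C σ).ncard := by
    intro σ hi₀
    have hne : (C i₀ ∩ uniqueUnion C σ).Nonempty :=
      ⟨e, (he i₀).2 rfl, (mem_uniqueUnion_of_pattern he).2 hi₀⟩
    exact (Set.ncard_pos ((hfin i₀).subset Set.inter_subset_left)).2 hne
  have himg : (fun (a : ι → ℕ) (i : ι) => if i = i₀ then a i₀ - 1 else a i) ''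
      {a | IsCoparking C a ∧ a i₀ ≠ 0}
      = {b | IsCoparking (fun i => C i \ {e}) b} := by
    apply subset_antisymm
    · rintro b ⟨a, ⟨ha, ha0⟩, rfl⟩
      intro σ hσ
      obtain ⟨i, hi, hlt⟩ := ha σ hσ
      refine ⟨i, hi, ?_⟩
      rw [hkey σ i hi]
      by_cases h : i = i₀
      · subst h
        have h1 : 1 ≤ a i := Nat.one_le_iff_ne_zero.2 ha0
        simp only [if_pos rfl, eq_self_iff_true, if_true] at hlt ⊢
        omega
      · simp only [if_neg h]
        omega
    · rintro b hb
      refine ⟨fun i => if i = i₀ then b i₀ + 1 else b i, ⟨?_, by simp⟩, ?_⟩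
      · intro σ hσ
        obtain ⟨i, hi, hlt⟩ := hb σ hσ
        rw [hkey σ i hi] at hlt
        refine ⟨i, hi, ?_⟩
        by_cases h : i = i₀
        · subst h
          simp only [if_pos rfl, eq_self_iff_true, if_true] at hlt ⊢
          omega
        · simp only [if_neg h] at hlt ⊢
          omega
      · funext i
        by_cases h : i = i₀
        · subst h; simp
        · simp [if_neg h]
  rw [← himg, Set.ncard_image_of_injOn]
  rintro a ⟨-, ha0⟩ a' ⟨-, ha0'⟩ hres
  funext i
  by_cases h : i = i₀
  · subst h
    have h2 := congrFun hres i
    simp only [if_pos rfl, eq_self_iff_true, if_true] at h2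
    omega
  · have := congrFun hres i
    simpa [if_neg h] using this

end CombLemmas2

namespace Matroid

section MatroidLemmas

open Set

variable {α : Type*} {M : Matroid α} {e : α} {K Z B X Y D : Set α}

lemma Circuit.dep' (hK : M.Circuit K) : M.Dep K := hK.1

lemma Circuit.subset_eq (hK : M.Circuit K) (hY : M.Dep Y) (hYK : Y ⊆ K) : Y = K :=
  subset_antisymm hYK (hK.2 hY hYK)

lemma Circuit.ssubset_indep (hK : M.Circuit K) (hYK : Y ⊂ K) : M.Indep Y := by
  by_contra h
  have hdep : M.Dep Y := ⟨h, hYK.subset.trans hK.dep'.subset_ground⟩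
  exact hYK.ne (hK.subset_eq hdep hYK.subset)

lemma Circuit.diff_singleton_indep (hK : M.Circuit K) (he : e ∈ K) : M.Indep (K \ {e}) :=
  hK.ssubset_indep ((Set.ssubset_iff_of_subset diff_subset).2 ⟨e, he, fun h => h.2 rfl⟩)

lemma IsCycle.subset_ground (hZ : M.IsCycle Z) : Z ⊆ M.E := by
  obtain ⟨S, hS, rfl⟩ := hZ
  exact sUnion_subset fun K hK => (hS K hK).dep'.subset_ground

lemma IsCycle.exists_circuit (hZ : M.IsCycle Z) (heZ : e ∈ Z) :
    ∃ K, M.Circuit K ∧ e ∈ K ∧ K ⊆ Z := by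
  obtain ⟨S, hS, rfl⟩ := hZ
  obtain ⟨K, hKS, heK⟩ := heZ
  exact ⟨K, hS K hKS, heK, subset_sUnion_of_mem hKS⟩

lemma exists_circuit_subset (M : Matroid α) (hfin : X.Finite) (hX : M.Dep X) :
    ∃ K, K ⊆ X ∧ M.Circuit K := by
  have hfam : {Y | Y ⊆ X ∧ M.Dep Y}.Finite :=
    hfin.finite_subsets.subset (fun Y hY => hY.1)
  obtain ⟨Y, hY, hmin⟩ := Set.Finite.exists_minimal hfam ⟨X, subset_rfl, hX⟩
  refine ⟨Y, hY.1, hY.2, ?_⟩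
  intro Y' hY' hY'Y
  have : Y = Y' := le_antisymm (hmin ⟨hY'Y.trans hY.1, hY'⟩ hY'Y) hY'Y
  exact this.le

lemma Circuit.exists_base_not_mem (hE : M.E.Finite) (hK : M.Circuit K) (he : e ∈ K) :
    ∃ B, M.IsBase B ∧ e ∉ B := by
  obtain ⟨B, hB, hKB⟩ := (hK.diff_singleton_indep he).exists_isBase_superset
  refine ⟨B, hB, fun heB => ?_⟩
  have hsub : K ⊆ B := by
    intro x hx
    by_cases hxe : x = e
    · subst hxe; exact heB
    · exact hKB ⟨hx, hxe⟩
  exact hK.dep'.1 (hB.indep.subset hsub)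

lemma loop_not_mem_base (hl : M.Dep {e}) (hB : M.IsBase B) : e ∉ B :=
  fun heB => hl.1 (hB.indep.subset (singleton_subset_iff.2 heB))

lemma Circuit.eq_singleton_of_loop (hl : M.Dep {e}) (hK : M.Circuit K) (he : e ∈ K) :
    K = {e} :=
  (hK.subset_eq hl (singleton_subset_iff.2 he)).symm

lemma delete_ground' (M : Matroid α) (e : α) : (M.deleteSet {e}).E = M.E \ {e} := rfl

lemma rkNat_eq_ncard_base (hB : M.IsBase B) : M.rkNat = B.ncard := by
  have h0 : M.IsBase M.exists_isBase.choose := M.exists_isBase.choose_spec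
  rw [rkNat, Set.ncard_def, h0.encard_eq_encard_of_isBase hB, ← Set.ncard_def]

lemma rkNat_le_ncard_ground (hE : M.E.Finite) : M.rkNat ≤ M.E.ncard := by
  obtain ⟨B, hB⟩ := M.exists_isBase
  rw [rkNat_eq_ncard_base hB]
  exact Set.ncard_le_ncard hB.subset_ground hE

lemma delete_base_iff' (hE : M.E.Finite) {B₀ : Set α} (hB₀ : M.IsBase B₀) (heB₀ : e ∉ B₀) :
    (M.deleteSet {e}).IsBase B ↔ M.IsBase B ∧ e ∉ B := by
  have hB₀i : (M.deleteSet {e}).Indep B₀ :=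
    restrict_indep_iff.2 ⟨hB₀.indep, subset_diff_singleton hB₀.subset_ground heB₀⟩
  constructor
  · intro hB
    have hBi : M.Indep B := (restrict_indep_iff.1 hB.indep).1
    have hBsub : B ⊆ M.E \ {e} := (restrict_indep_iff.1 hB.indep).2
    obtain ⟨B₂, hB₂, hBB₂⟩ := hBi.exists_isBase_superset
    obtain ⟨B₁, hB₁, hB₀B₁⟩ := hB₀i.exists_isBase_superset
    have h1 : B₀ = B₁ := hB₀.eq_of_subset_indep (restrict_indep_iff.1 hB₁.indep).1 hB₀B₁
    have hcard : B₂.encard ≤ B.encard := by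
      rw [hB.encard_eq_encard_of_isBase hB₁, ← h1, hB₀.encard_eq_encard_of_isBase hB₂]
    have hBB₂' : B = B₂ :=
      Set.Finite.eq_of_subset_of_encard_le' (hE.subset hB₂.subset_ground) hBB₂ hcard
    exact ⟨hBB₂' ▸ hB₂, fun heB => (hBsub heB).2 rfl⟩
  · rintro ⟨hB, heB⟩
    rw [isBase_iff_maximal_indep]
    refine ⟨restrict_indep_iff.2 ⟨hB.indep, subset_diff_singleton hB.subset_ground heB⟩, ?_⟩
    intro I hI hBI
    exact (hB.eq_of_subset_indep (restrict_indep_iff.1 hI).1 hBI).ge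

lemma delete_rkNat (hE : M.E.Finite) {B₀ : Set α} (hB₀ : M.IsBase B₀) (heB₀ : e ∉ B₀) :
    (M.deleteSet {e}).rkNat = M.rkNat := by
  rw [rkNat_eq_ncard_base ((delete_base_iff' hE hB₀ heB₀).2 ⟨hB₀, heB₀⟩),
    rkNat_eq_ncard_base hB₀]

lemma Circuit.delete (hK : M.Circuit K) (heK : e ∉ K) : (M.deleteSet {e}).Circuit K := by
  refine ⟨restrict_dep_iff.2 ⟨hK.dep'.1, subset_diff_singleton hK.dep'.subset_ground heK⟩, ?_⟩
  intro Y hY hYK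
  have hYdep : M.Dep Y := ⟨(restrict_dep_iff.1 hY).1, hYK.trans hK.dep'.subset_ground⟩
  exact hK.2 hYdep hYK

lemma IsCycle.delete (hZ : M.IsCycle Z) (heZ : e ∉ Z) : (M.deleteSet {e}).IsCycle Z := by
  obtain ⟨S, hS, rfl⟩ := hZ
  exact ⟨S, fun K hK =>
    (hS K hK).delete (fun h => heZ ((subset_sUnion_of_mem hK) h)), rfl⟩

lemma IsCycle.delete_loop (hl : M.Dep {e}) (hZ : M.IsCycle Z) :
    (M.deleteSet {e}).IsCycle (Z \ {e}) := by
  obtain ⟨S, hS, rfl⟩ := hZ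
  refine ⟨{K | K ∈ S ∧ K ≠ {e}}, ?_, ?_⟩
  · rintro K ⟨hKS, hKne⟩
    have hKc := hS K hKS
    exact hKc.delete (fun heK => hKne (hKc.eq_singleton_of_loop hl heK))
  · ext x
    simp only [Set.mem_diff, Set.mem_sUnion, Set.mem_singleton_iff, Set.mem_setOf_eq]
    constructor
    · rintro ⟨⟨K, hKS, hxK⟩, hxe⟩
      refine ⟨K, ⟨hKS, fun hKeq => hxe ?_⟩, hxK⟩
      rw [hKeq] at hxK
      exact hxK
    · rintro ⟨K, ⟨hKS, hKne⟩, hxK⟩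
      have heK : e ∉ K := fun heK => hKne ((hS K hKS).eq_singleton_of_loop hl heK)
      exact ⟨⟨K, hKS, hxK⟩, fun hxe => heK (hxe ▸ hxK)⟩

end MatroidLemmas

end Matroid

namespace Matroid

section ContractLemmas

open Set

variable {α : Type*} {M : Matroid α} {e : α} {K Z B X Y D : Set α}

lemma contract_ground' (M : Matroid α) (e : α) : (M.contractSet {e}).E = M.E \ {e} := rfl

lemma insert_compl_eq (heE : e ∈ M.E) (hB : B ⊆ M.E \ {e}) :
    M.E \ ((M.E \ {e}) \ B) = insert e B := by
  ext x
  simp only [Set.mem_diff, Set.mem_singleton_iff, Set.mem_insert_iff, not_and, not_not]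
  constructor
  · rintro ⟨hxE, h⟩
    by_cases hxe : x = e
    · exact Or.inl hxe
    · exact Or.inr (h ⟨hxE, hxe⟩)
  · rintro (rfl | hxB)
    · exact ⟨heE, fun h => absurd rfl h.2⟩
    · exact ⟨(hB hxB).1, fun _ => hxB⟩

lemma contract_base_iff' (hE : M.E.Finite) (he : M.Indep {e}) :
    (M.contractSet {e}).IsBase B ↔ M.IsBase (insert e B) ∧ e ∉ B := by
  have heE : e ∈ M.E := he.subset_ground rfl
  obtain ⟨B₀, hB₀, heB₀⟩ := he.exists_isBase_superset
  have heB₀' : e ∈ B₀ := heB₀ rfl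
  have hdualE : M✶.E.Finite := by rwa [dual_ground]
  have hdualB₀ : M✶.IsBase (M.E \ B₀) := by
    rw [dual_isBase_iff (by exact diff_subset)]
    rwa [Set.diff_diff_cancel_left hB₀.subset_ground]
  have hdualB₀e : e ∉ M.E \ B₀ := fun h => h.2 heB₀'
  constructor
  · intro hB
    have h1 := (dual_isBase_iff' (M := M✶.deleteSet {e})).1 hB
    obtain ⟨h2, h3⟩ := h1
    have hgr : (M✶.deleteSet {e}).E = M.E \ {e} := rfl
    rw [hgr] at h2 h3
    rw [delete_base_iff' hdualE hdualB₀ hdualB₀e] at h2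
    have h4 : M.IsBase (M.E \ ((M.E \ {e}) \ B)) := by
      have := (dual_isBase_iff (M := M) (B := (M.E \ {e}) \ B)
        (diff_subset.trans diff_subset)).1 h2.1
      exact this
    rw [insert_compl_eq heE h3] at h4
    exact ⟨h4, fun h => (h3 h).2 rfl⟩
  · rintro ⟨hBe, heB⟩
    have hBsub : B ⊆ M.E \ {e} :=
      subset_diff_singleton ((subset_insert e B).trans hBe.subset_ground) heB
    have h2 : M✶.IsBase ((M.E \ {e}) \ B) := by
      rw [dual_isBase_iff (diff_subset.trans diff_subset), insert_compl_eq heE hBsub]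
      exact hBe
    have h3 : (M✶.deleteSet {e}).IsBase ((M.E \ {e}) \ B) :=
      (delete_base_iff' hdualE hdualB₀ hdualB₀e).2 ⟨h2, fun h => h.1.2 rfl⟩
    exact (dual_isBase_iff' (M := M✶.deleteSet {e})).2 ⟨h3, hBsub⟩

lemma contract_indep_iff' (hE : M.E.Finite) (he : M.Indep {e}) :
    (M.contractSet {e}).Indep X ↔ X ⊆ M.E \ {e} ∧ M.Indep (insert e X) := by
  constructor
  · intro hX
    have hsub : X ⊆ M.E \ {e} := by
      have := hX.subset_ground
      rwa [contract_ground'] at this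
    obtain ⟨B', hB', hXB'⟩ := hX.exists_isBase_superset
    rw [contract_base_iff' hE he] at hB'
    exact ⟨hsub, hB'.1.indep.subset (insert_subset_insert hXB')⟩
  · rintro ⟨hXsub, hXi⟩
    obtain ⟨B, hB, hsub⟩ := hXi.exists_isBase_superset
    have heB : e ∈ B := hsub (mem_insert e X)
    have hbase : (M.contractSet {e}).IsBase (B \ {e}) := by
      rw [contract_base_iff' hE he]
      exact ⟨by rwa [insert_diff_singleton, insert_eq_of_mem heB], fun h => h.2 rfl⟩
    exact hbase.indep.subset (subset_diff_singleton
      (fun x hx => hsub (mem_insert_of_mem _ hx)) (fun h => (hXsub h).2 rfl))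

lemma contract_dep_of_dep (hE : M.E.Finite) (he : M.Indep {e})
    (hX : X ⊆ M.E \ {e}) (hdep : M.Dep (insert e X)) : (M.contractSet {e}).Dep X := by
  rw [dep_iff, contract_ground']
  refine ⟨fun hi => hdep.1 ((contract_indep_iff' hE he).1 hi).2, hX⟩

lemma contract_rkNat (hE : M.E.Finite) (he : M.Indep {e}) :
    (M.contractSet {e}).rkNat + 1 = M.rkNat := by
  obtain ⟨B, hB, heB⟩ := he.exists_isBase_superset
  have heB' : e ∈ B := heB rfl
  have h1 : (M.contractSet {e}).IsBase (B \ {e}) := by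
    rw [contract_base_iff' hE he]
    exact ⟨by rwa [insert_diff_singleton, insert_eq_of_mem heB'], fun h => h.2 rfl⟩
  rw [rkNat_eq_ncard_base h1, rkNat_eq_ncard_base hB]
  exact Set.ncard_diff_singleton_add_one heB' (hE.subset hB.subset_ground)

end ContractLemmas

end Matroid

namespace Matroid

section CycleContract

open Set

variable {α : Type*} {M : Matroid α} {e : α} {K Z B X Y D : Set α}

lemma Circuit.contract_diff_circuit (hE : M.E.Finite) (he : M.Indep {e})
    (hD : M.Circuit D) (heD : e ∈ D) : (M.contractSet {e}).Circuit (D \ {e}) := by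
  have hDsub : D \ {e} ⊆ M.E \ {e} := diff_subset_diff_left hD.dep'.subset_ground
  refine ⟨contract_dep_of_dep hE he hDsub
    (by rw [insert_diff_singleton, insert_eq_of_mem heD]; exact hD.dep'), ?_⟩
  intro Y hY hYD
  by_contra hnot
  obtain ⟨z, hzD, hzY⟩ := not_subset.1 hnot
  have hYe : insert e Y ⊂ D := by
    rw [ssubset_iff_of_subset (insert_subset heD (hYD.trans diff_subset))]
    refine ⟨z, hzD.1, fun h => ?_⟩
    rcases mem_insert_iff.1 h with h | h
    · exact hzD.2 (mem_singleton_iff.2 h)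
    · exact hzY h
  have hind : M.Indep (insert e Y) := hD.ssubset_indep hYe
  have : (M.contractSet {e}).Indep Y := (contract_indep_iff' hE he).2
    ⟨(hYD.trans hDsub), hind⟩
  exact hY.1 this

lemma exists_contract_circuit (hE : M.E.Finite) (he : M.Indep {e})
    (hD : M.Circuit D) {x : α} (hx : x ∈ D) (hxe : x ≠ e) :
    ∃ K, (M.contractSet {e}).Circuit K ∧ x ∈ K ∧ K ⊆ D \ {e} := by
  by_cases heD : e ∈ D
  · exact ⟨D \ {e}, hD.contract_diff_circuit hE he heD, ⟨hx, hxe⟩, subset_rfl⟩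
  · have hDE : D ⊆ M.E := hD.dep'.subset_ground
    have hDsub : D ⊆ M.E \ {e} := subset_diff_singleton hDE heD
    have heY : e ∉ D \ {x} := fun h => heD h.1
    obtain ⟨Y, hY⟩ := (M.contractSet {e}).exists_isBasis (D \ {x})
      (by rw [contract_ground']; exact diff_subset.trans hDsub)
    have hYsub : Y ⊆ D \ {x} := hY.subset
    have hYe : M.Indep (insert e Y) := ((contract_indep_iff' hE he).1 hY.indep).2
    have heYY : e ∉ Y := fun h => heY (hYsub h)
    -- (insert e Y) is an M-basis of insert e (D \ {x})
    have hbasis : M.IsBasis (insert e Y) (insert e (D \ {x})) := by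
      rw [isBasis_iff (insert_subset (he.subset_ground rfl) (diff_subset.trans hDE))]
      refine ⟨hYe, insert_subset_insert hYsub, ?_⟩
      intro J hJ hsubJ hJsub
      have heJ : e ∈ J := hsubJ (mem_insert _ _)
      have hJd : J \ {e} ⊆ D \ {x} := by
        intro y hy
        rcases hJsub hy.1 with h | h
        · exact absurd h hy.2
        · exact h
      have hJe : (M.contractSet {e}).Indep (J \ {e}) := (contract_indep_iff' hE he).2
        ⟨subset_diff_singleton (hJd.trans (diff_subset.trans hDE)) (fun h => h.2 rfl),
          by rwa [insert_diff_singleton, insert_eq_of_mem heJ]⟩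
      have hYJ : Y = J \ {e} := hY.eq_of_subset_indep hJe
        (subset_diff_singleton ((subset_insert e Y).trans hsubJ) heYY) hJd
      rw [hYJ, insert_diff_singleton, insert_eq_of_mem heJ]
    -- x is in the closure
    have hxclD : x ∈ M.closure (D \ {x}) := by
      rw [(hD.diff_singleton_indep hx).mem_closure_iff]
      left
      rw [insert_diff_singleton, insert_eq_of_mem hx]
      exact hD.dep'
    have hxcl : x ∈ M.closure (insert e Y) := by
      rw [hbasis.closure_eq_closure]
      exact M.closure_subset_closure (subset_insert _ _) hxclD
    have hxnm : x ∉ insert e Y := by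
      rintro (rfl | hxY)
      · exact hxe rfl
      · exact (hYsub hxY).2 rfl
    have hdep : M.Dep (insert x (insert e Y)) :=
      (hYe.mem_closure_iff.1 hxcl).resolve_right hxnm
    have hNdep : (M.contractSet {e}).Dep (insert x Y) := by
      apply contract_dep_of_dep hE he
        (insert_subset ⟨hDE hx, hxe⟩
          (hYsub.trans (diff_subset.trans hDsub)))
      rwa [Set.insert_comm]
    have hfinxY : (insert x Y).Finite :=
      (hE.subset hDE).subset (insert_subset hx (hYsub.trans diff_subset))
    obtain ⟨K, hKsub, hKc⟩ := (M.contractSet {e}).exists_circuit_subset hfinxY hNdep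
    refine ⟨K, hKc, ?_, ?_⟩
    · by_contra hxK
      have hKY : K ⊆ Y := fun y hy => ((hKsub hy).resolve_left (fun h => hxK (h ▸ hy)))
      exact hKc.dep'.1 (hY.indep.subset hKY)
    · intro y hy
      rcases hKsub hy with rfl | h
      · exact ⟨hx, hxe⟩
      · exact ⟨(hYsub h).1, fun hq => heYY (hq ▸ h)⟩

lemma IsCycle.contract (hE : M.E.Finite) (he : M.Indep {e}) (hZ : M.IsCycle Z) :
    (M.contractSet {e}).IsCycle (Z \ {e}) := by
  refine ⟨{K | (M.contractSet {e}).Circuit K ∧ K ⊆ Z \ {e}}, fun K hK => hK.1, ?_⟩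
  apply subset_antisymm
  · rintro x ⟨hxZ, hxe⟩
    obtain ⟨D, hD, hxD, hDZ⟩ := hZ.exists_circuit hxZ
    obtain ⟨K, hKc, hxK, hKsub⟩ := exists_contract_circuit hE he hD hxD hxe
    exact ⟨K, ⟨hKc, hKsub.trans (diff_subset_diff_left hDZ)⟩, hxK⟩
  · exact sUnion_subset fun K hK => hK.2

end CycleContract

end Matroid

namespace Matroid

section BaseCount

open Set

variable {α : Type*} {M : Matroid α} {e : α} {X B : Set α}

lemma delete_dep_of_dep (hdep : M.Dep X) (heX : e ∉ X) : (M.deleteSet {e}).Dep X :=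
  restrict_dep_iff.2 ⟨hdep.1, subset_diff_singleton hdep.subset_ground heX⟩

lemma setOf_base_finite (hE : M.E.Finite) : {B | M.IsBase B}.Finite :=
  hE.finite_subsets.subset (fun _ hB => hB.subset_ground)

lemma ncard_base_split (hE : M.E.Finite) (e : α) :
    {B | M.IsBase B}.ncard = {B | M.IsBase B ∧ e ∈ B}.ncard + {B | M.IsBase B ∧ e ∉ B}.ncard := by
  classical
  have hfin : {B | M.IsBase B}.Finite := setOf_base_finite hE
  rw [← Set.ncard_union_eq (Set.disjoint_left.2 (fun B hB hB' => hB'.2 hB.2))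
    (hfin.subset (fun B hB => hB.1)) (hfin.subset (fun B hB => hB.1))]
  congr 1
  ext B
  simp only [Set.mem_union, Set.mem_setOf_eq]
  tauto

lemma ncard_contract_bases (hE : M.E.Finite) (he : M.Indep {e}) :
    {B | (M.contractSet {e}).IsBase B}.ncard = {B | M.IsBase B ∧ e ∈ B}.ncard := by
  classical
  have himg : (insert e) '' {B | (M.contractSet {e}).IsBase B} = {B | M.IsBase B ∧ e ∈ B} := by
    ext B
    simp only [Set.mem_image, Set.mem_setOf_eq]
    constructor
    · rintro ⟨B', hB', rfl⟩
      rw [contract_base_iff' hE he] at hB'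
      exact ⟨hB'.1, mem_insert _ _⟩
    · rintro ⟨hB, heB⟩
      refine ⟨B \ {e}, ?_, by rw [insert_diff_singleton, insert_eq_of_mem heB]⟩
      rw [contract_base_iff' hE he]
      exact ⟨by rw [insert_diff_singleton, insert_eq_of_mem heB]; exact hB, fun h => h.2 rfl⟩
  rw [← himg, Set.ncard_image_of_injOn]
  intro B hB B' hB' hins
  have h1 : e ∉ B := ((contract_base_iff' hE he).1 hB).2
  have h2 : e ∉ B' := ((contract_base_iff' hE he).1 hB').2
  rw [← Set.insert_diff_self_of_notMem h1, ← Set.insert_diff_self_of_notMem h2, hins]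

end BaseCount

end Matroid

section MasterA

open Set Matroid

lemma IsCoparking.restrict {α ι : Type*} [Fintype ι] [DecidableEq ι] {C : ι → Set α} {a : ι → ℕ}
    (ha : IsCoparking C a) (i₀ : ι) :
    IsCoparking (fun j : {i : ι // i ≠ i₀} => C j.1) (fun j => a j.1) := by
  intro σ' hσ'
  have hσ : (σ'.map (Function.Embedding.subtype _)).Nonempty := hσ'.map
  obtain ⟨i, hi, hlt⟩ := ha _ hσ
  rw [Finset.mem_map] at hi
  obtain ⟨j, hj, rfl⟩ := hi
  refine ⟨j, hj, ?_⟩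
  rw [uniqueUnion_subtype]
  exact hlt

lemma masterA {α : Type*} : ∀ (n : ℕ) (M : Matroid α), M.E.Finite → M.E.ncard = n →
    ∀ (ι : Type) [Fintype ι] (C : ι → Set α), (∀ i, M.IsCycle (C i)) →
    M.E.ncard < Fintype.card ι + M.rkNat → {a : ι → ℕ | IsCoparking C a} = ∅ := by
  intro n
  induction n using Nat.strong_induction_on with
  | _ n IH =>
  intro M hE hn ι instι C hcyc hlt
  letI := instι
  classical
  rw [Set.eq_empty_iff_forall_notMem]
  intro a ha
  cases isEmpty_or_nonempty ι with
  | inl hempty =>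
    haveI := hempty
    have h0 : Fintype.card ι = 0 := Fintype.card_eq_zero
    have hle := Matroid.rkNat_le_ncard_ground hE
    omega
  | inr hne =>
    by_cases hU : uniqueUnion C Finset.univ = ∅
    · obtain ⟨i, hi, hlt'⟩ := ha Finset.univ Finset.univ_nonempty
      rw [hU, Set.inter_empty, Set.ncard_empty] at hlt'
      omega
    · obtain ⟨e, he⟩ := Set.nonempty_iff_ne_empty.2 hU
      obtain ⟨i₀, ⟨-, hei₀⟩, huniq⟩ := he
      have hpat : ∀ i, e ∈ C i ↔ i = i₀ := fun i =>
        ⟨fun h => huniq i ⟨Finset.mem_univ i, h⟩, fun h => h ▸ hei₀⟩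
      have heE : e ∈ M.E := (hcyc i₀).subset_ground hei₀
      obtain ⟨K, hKc, heK, -⟩ := (hcyc i₀).exists_circuit hei₀
      obtain ⟨B₀, hB₀, heB₀⟩ := hKc.exists_base_not_mem hE heK
      have hn1 : 1 ≤ n := by
        rw [← hn]
        exact (Set.ncard_pos hE).2 ⟨e, heE⟩
      have hE' : (M.deleteSet {e}).E.Finite := hE.subset diff_subset
      have hn' : (M.deleteSet {e}).E.ncard = n - 1 := by
        rw [delete_ground', Set.ncard_diff_singleton_of_mem heE, hn]
      have hcyc' : ∀ j : {i : ι // i ≠ i₀}, (M.deleteSet {e}).IsCycle (C j.1) := fun j =>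
        (hcyc j.1).delete (fun hmem => j.2 ((hpat j.1).1 hmem))
      have hcard' : Fintype.card {i : ι // i ≠ i₀} + 1 = Fintype.card ι := by
        rw [Fintype.card_subtype_compl, Fintype.card_subtype_eq]
        have : 1 ≤ Fintype.card ι := Fintype.card_pos
        omega
      have hrk' : (M.deleteSet {e}).rkNat = M.rkNat := delete_rkNat hE hB₀ heB₀
      have hlt' : (M.deleteSet {e}).E.ncard
          < Fintype.card {i : ι // i ≠ i₀} + (M.deleteSet {e}).rkNat := by
        rw [hn', hrk']
        omega
      have hIH := IH (n-1) (by omega) (M.deleteSet {e}) hE' hn' {i : ι // i ≠ i₀}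
        (fun j => C j.1) hcyc' hlt'
      rw [Set.eq_empty_iff_forall_notMem] at hIH
      exact hIH _ (ha.restrict i₀)

end MasterA

section MasterB

open Set Matroid

lemma masterB {α : Type*} : ∀ (n : ℕ) (M : Matroid α), M.E.Finite → M.E.ncard = n →
    ∀ (ι : Type) [Fintype ι] (C : ι → Set α), (∀ i, M.IsCycle (C i)) →
    Fintype.card ι + M.rkNat = M.E.ncard →
    (∀ σ : Finset ι, σ.Nonempty → M.Dep (uniqueUnion C σ)) →
    {a : ι → ℕ | IsCoparking C a}.ncard = {B | M.IsBase B}.ncard := by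
  intro n
  induction n using Nat.strong_induction_on with
  | _ n IH =>
  intro M hE hn ι instι C hcyc hcard hdep
  letI := instι
  classical
  cases isEmpty_or_nonempty ι with
  | inl hempty =>
    haveI := hempty
    have h0 : Fintype.card ι = 0 := Fintype.card_eq_zero
    have hrk : M.rkNat = M.E.ncard := by omega
    have hs : {a : ι → ℕ | IsCoparking C a} = Set.univ := by
      ext a
      simp only [Set.mem_setOf_eq, Set.mem_univ, iff_true]
      intro σ hσ
      obtain ⟨i, -⟩ := hσ
      exact isEmptyElim i
    have hbase : {B | M.IsBase B} = {M.E} := by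
      ext B
      simp only [Set.mem_setOf_eq, Set.mem_singleton_iff]
      constructor
      · intro hB
        exact Set.eq_of_subset_of_ncard_le hB.subset_ground
          (by rw [← hrk, rkNat_eq_ncard_base hB]) hE
      · rintro rfl
        obtain ⟨B₀, hB₀⟩ := M.exists_isBase
        have hBE : B₀ = M.E := Set.eq_of_subset_of_ncard_le hB₀.subset_ground
          (by rw [← hrk, rkNat_eq_ncard_base hB₀]) hE
        rwa [← hBE]
    rw [hs, hbase, Set.ncard_univ, Set.ncard_singleton]
    haveI : Unique (ι → ℕ) := Pi.uniqueOfIsEmpty _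
    exact Nat.card_unique
  | inr hne =>
    have hU : M.Dep (uniqueUnion C Finset.univ) := hdep Finset.univ Finset.univ_nonempty
    obtain ⟨e, he⟩ := hU.nonempty
    obtain ⟨i₀, ⟨-, hei₀⟩, huniq⟩ := he
    have hpat : ∀ i, e ∈ C i ↔ i = i₀ := fun i =>
      ⟨fun h => huniq i ⟨Finset.mem_univ i, h⟩, fun h => h ▸ hei₀⟩
    have heE : e ∈ M.E := (hcyc i₀).subset_ground hei₀
    obtain ⟨K, hKc, heK, -⟩ := (hcyc i₀).exists_circuit hei₀
    obtain ⟨B₀, hB₀, heB₀⟩ := hKc.exists_base_not_mem hE heK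
    have hn1 : 1 ≤ n := by
      rw [← hn]
      exact (Set.ncard_pos hE).2 ⟨e, heE⟩
    have hfinC : ∀ i, (C i).Finite := fun i => hE.subset (hcyc i).subset_ground
    -- deletion data
    have hE' : (M.deleteSet {e}).E.Finite := hE.subset diff_subset
    have hn' : (M.deleteSet {e}).E.ncard = n - 1 := by
      rw [delete_ground', Set.ncard_diff_singleton_of_mem heE, hn]
    have hrk' : (M.deleteSet {e}).rkNat = M.rkNat := delete_rkNat hE hB₀ heB₀
    have hcard1 : Fintype.card {i : ι // i ≠ i₀} + 1 = Fintype.card ι := by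
      rw [Fintype.card_subtype_compl, Fintype.card_subtype_eq]
      have : 1 ≤ Fintype.card ι := Fintype.card_pos
      omega
    -- bases split
    have hBsplit := ncard_base_split hE e
    -- the a i₀ = 0 part
    have hA0 : {a : ι → ℕ | IsCoparking C a ∧ a i₀ = 0}.ncard
        = {B | M.IsBase B ∧ e ∉ B}.ncard := by
      rw [ncard_coparking_zero (hfinC i₀) hpat]
      have hcyc' : ∀ j : {i : ι // i ≠ i₀}, (M.deleteSet {e}).IsCycle (C j.1) := fun j =>
        (hcyc j.1).delete (fun hmem => j.2 ((hpat j.1).1 hmem))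
      have hcard' : Fintype.card {i : ι // i ≠ i₀} + (M.deleteSet {e}).rkNat
          = (M.deleteSet {e}).E.ncard := by
        rw [hn', hrk']
        omega
      have hdep' : ∀ σ' : Finset {i : ι // i ≠ i₀}, σ'.Nonempty →
          (M.deleteSet {e}).Dep (uniqueUnion (fun j : {i : ι // i ≠ i₀} => C j.1) σ') := by
        intro σ' hσ'
        rw [uniqueUnion_subtype]
        have hdepσ : M.Dep (uniqueUnion C (σ'.map (Function.Embedding.subtype _))) :=
          hdep _ hσ'.map
        apply delete_dep_of_dep hdepσ
        intro hmem
        have hi₀ : i₀ ∈ σ'.map (Function.Embedding.subtype _) :=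
          (mem_uniqueUnion_of_pattern hpat).1 hmem
        rw [Finset.mem_map] at hi₀
        obtain ⟨j, -, hj⟩ := hi₀
        exact j.2 (by simpa using hj)
      have hIH := IH (n-1) (by omega) (M.deleteSet {e}) hE' hn' {i : ι // i ≠ i₀}
        (fun j => C j.1) hcyc' hcard' hdep'
      rw [hIH]
      congr 1
      ext B
      simp only [Set.mem_setOf_eq]
      exact delete_base_iff' hE hB₀ heB₀
    by_cases hloop : M.Indep {e}
    · -- e is not a loop : use contraction
      have hEc : (M.contractSet {e}).E.Finite := by
        rw [contract_ground']
        exact hE.subset diff_subset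
      have hnc : (M.contractSet {e}).E.ncard = n - 1 := by
        rw [contract_ground', Set.ncard_diff_singleton_of_mem heE, hn]
      have hrkc : (M.contractSet {e}).rkNat + 1 = M.rkNat := contract_rkNat hE hloop
      have hA1 : {a : ι → ℕ | IsCoparking C a ∧ a i₀ ≠ 0}.ncard
          = {B | M.IsBase B ∧ e ∈ B}.ncard := by
        clear hA0
        rw [ncard_coparking_pos hfinC hpat]
        have hcycc : ∀ i, (M.contractSet {e}).IsCycle (C i \ {e}) := fun i =>
          (hcyc i).contract hE hloop
        have hcardc : Fintype.card ι + (M.contractSet {e}).rkNat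
            = (M.contractSet {e}).E.ncard := by
          rw [hnc]
          omega
        have hdepc : ∀ σ : Finset ι, σ.Nonempty →
            (M.contractSet {e}).Dep (uniqueUnion (fun i => C i \ {e}) σ) := by
          intro σ hσ
          rw [uniqueUnion_diff_singleton]
          apply contract_dep_of_dep hE hloop
            (diff_subset_diff_left (hdep σ hσ).subset_ground)
          apply (hdep σ hσ).superset
          · intro x hx
            by_cases hxe : x = e
            · subst hxe
              exact mem_insert _ _
            · exact mem_insert_of_mem _ ⟨hx, hxe⟩
        have hIHc := IH (n-1) (by omega) (M.contractSet {e}) hEc hnc ι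
          (fun i => C i \ {e}) hcycc hcardc hdepc
        rw [hIHc]
        exact ncard_contract_bases hE hloop
      have hfinS : {a : ι → ℕ | IsCoparking C a}.Finite := coparking_setOf_finite C
      have hsplit : {a : ι → ℕ | IsCoparking C a}.ncard
          = {a | IsCoparking C a ∧ a i₀ = 0}.ncard
            + {a | IsCoparking C a ∧ a i₀ ≠ 0}.ncard := by
        rw [← Set.ncard_union_eq (Set.disjoint_left.2 (fun a ha ha' => ha'.2 ha.2))
          (hfinS.subset (fun a ha => ha.1)) (hfinS.subset (fun a ha => ha.1))]
        congr 1
        ext a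
        simp only [Set.mem_union, Set.mem_setOf_eq]
        tauto
      rw [hsplit, hBsplit, hA0, hA1]
      exact Nat.add_comm _ _
    · -- e is a loop
      have hloopdep : M.Dep {e} := ⟨hloop, singleton_subset_iff.2 heE⟩
      have hA1 : {a : ι → ℕ | IsCoparking C a ∧ a i₀ ≠ 0}.ncard = 0 := by
        clear hA0
        rw [ncard_coparking_pos hfinC hpat]
        have hemp := masterA (n-1) (M.deleteSet {e}) hE' hn' ι (fun i => C i \ {e})
          (fun i => (hcyc i).delete_loop hloopdep) (by rw [hn', hrk']; omega)
        rw [hemp, Set.ncard_empty]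
      have hBe : {B | M.IsBase B ∧ e ∈ B}.ncard = 0 := by
        rw [Set.ncard_eq_zero (setOf_base_finite hE |>.subset (fun B hB => hB.1))]
        rw [Set.eq_empty_iff_forall_notMem]
        rintro B ⟨hB, heB⟩
        exact loop_not_mem_base hloopdep hB heB
      have hfinS : {a : ι → ℕ | IsCoparking C a}.Finite := coparking_setOf_finite C
      have hsplit : {a : ι → ℕ | IsCoparking C a}.ncard
          = {a | IsCoparking C a ∧ a i₀ = 0}.ncard
            + {a | IsCoparking C a ∧ a i₀ ≠ 0}.ncard := by
        rw [← Set.ncard_union_eq (Set.disjoint_left.2 (fun a ha ha' => ha'.2 ha.2))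
          (hfinS.subset (fun a ha => ha.1)) (hfinS.subset (fun a ha => ha.1))]
        congr 1
        ext a
        simp only [Set.mem_union, Set.mem_setOf_eq]
        tauto
      rw [hsplit, hBsplit, hA0, hA1, hBe]
      rw [Nat.add_zero, Nat.zero_add]

end MasterB

/-- the number of coparking functions with respect to a cycle system of `M`
equals the number of bases of `M`. -/
theorem statement_18 {α : Type*} {g : ℕ} (M : Matroid α) (hE : M.E.Finite)
    (C : Fin g → Set α) (hCS : M.IsCycleSystem C) :
    {a : Fin g → ℕ | IsCoparking C a}.ncard = {B : Set α | M.IsBase B}.ncard := by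
  classical
  obtain ⟨hcard, hcyc, hdep⟩ := hCS
  have hle : M.rkNat ≤ M.E.ncard := Matroid.rkNat_le_ncard_ground hE
  have hcard' : Fintype.card (Fin g) + M.rkNat = M.E.ncard := by
    rw [hcard]
    omega
  exact masterB M.E.ncard M hE rfl (Fin g) C hcyc hcard' hdep
end
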